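/- If S is an extremal word and Y is both a proper nonempty prefix and suffix of S (S = XY = YZ with X, Z nonempty), then Y has odd length and Y is itself extremal. -/
import Mathlib


noncomputable def cf (S : List ℕ) (x : ℝ) : ℝ :=
  S.foldr (fun a y => 1 / ((a : ℝ) + y)) x

/-- A string `S` is extremal if `XY < YX` (in the alternate lexicographic order,
i.e. `[0;XY] < [0;YX]` as real numbers) for every splitting `S = XY` into
nonempty strings. -/
def Extremal (S : List ℕ) : Prop :=
  ∀ X Y : List ℕ, X ≠ [] → Y ≠ [] → S = X ++ Y →
    cf (X ++ Y) 0 < cf (Y ++ X) 0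

/-! ### Basic facts about `cf` -/

lemma cf_nil (x : ℝ) : cf [] x = x := rfl

lemma cf_cons (a : ℕ) (A : List ℕ) (x : ℝ) : cf (a :: A) x = 1 / ((a : ℝ) + cf A x) := rfl

lemma cf_nonneg {A : List ℕ} {x : ℝ} (hA : ∀ a ∈ A, 1 ≤ a) (hx : 0 ≤ x) : 0 ≤ cf A x := by
  induction A with
  | nil => exact hx
  | cons a A ih =>
    have h1 : (1 : ℝ) ≤ (a : ℝ) := by exact_mod_cast hA a (by simp)
    have h2 : 0 ≤ cf A x := ih (fun b hb => hA b (by simp [hb]))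
    rw [cf_cons]
    have hd : 0 < (a : ℝ) + cf A x := by linarith
    positivity

lemma cf_pos {A : List ℕ} {x : ℝ} (hne : A ≠ []) (hA : ∀ a ∈ A, 1 ≤ a) (hx : 0 ≤ x) :
    0 < cf A x := by
  cases A with
  | nil => exact absurd rfl hne
  | cons a A =>
    have h1 : (1 : ℝ) ≤ (a : ℝ) := by exact_mod_cast hA a (by simp)
    have h2 : 0 ≤ cf A x := cf_nonneg (fun b hb => hA b (by simp [hb])) hx
    rw [cf_cons]
    have hd : 0 < (a : ℝ) + cf A x := by linarith
    positivity

lemma cf_le_one {A : List ℕ} {x : ℝ} (hne : A ≠ []) (hA : ∀ a ∈ A, 1 ≤ a) (hx : 0 ≤ x) :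
    cf A x ≤ 1 := by
  cases A with
  | nil => exact absurd rfl hne
  | cons a A =>
    have h1 : (1 : ℝ) ≤ (a : ℝ) := by exact_mod_cast hA a (by simp)
    have h2 : 0 ≤ cf A x := cf_nonneg (fun b hb => hA b (by simp [hb])) hx
    rw [cf_cons]
    rw [div_le_one (by linarith)]
    linarith

/-! ### The alternating lexicographic order, combinatorially -/

def alt : Bool → List ℕ → List ℕ → Prop
  | p, a :: A, b :: B => (if p then b < a else a < b) ∨ (a = b ∧ alt (!p) A B)
  | _, _, _ => False

lemma alt_nil_left (p : Bool) (B : List ℕ) : ¬ alt p [] B := by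
  cases B <;> exact fun h => h

lemma alt_nil_right (p : Bool) (A : List ℕ) : ¬ alt p A [] := by
  cases A <;> exact fun h => h

lemma one_div_lt_one_div_aux {d e : ℝ} (hd : 0 < d) (h : d < e) : 1 / e < 1 / d := by
  have he : 0 < e := hd.trans h
  rw [div_lt_div_iff₀ he hd]
  linarith

/-- Bridge lemma: the combinatorial alternating order decides comparisons of `cf` values,
for equal-length words with entries `≥ 1` and tails in `[0,1]`. -/
lemma cf_lt_of_alt : ∀ (A B : List ℕ) (p : Bool) (t : ℝ), A.length = B.length →
    (∀ a ∈ A, 1 ≤ a) → (∀ a ∈ B, 1 ≤ a) → 0 ≤ t → t ≤ 1 → alt p A B →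
    (if p then cf A t < cf B t else cf B t < cf A t) := by
  intro A
  induction A with
  | nil => intro B p t _ _ _ _ _ h; exact absurd h (alt_nil_left p B)
  | cons a A ih =>
    intro B p t hlen hAe hBe ht0 ht1 h
    cases B with
    | nil => exact absurd h (alt_nil_right p _)
    | cons b B =>
      have ha1 : (1 : ℝ) ≤ (a : ℝ) := by exact_mod_cast hAe a (by simp)
      have hb1 : (1 : ℝ) ≤ (b : ℝ) := by exact_mod_cast hBe b (by simp)
      have hAe' : ∀ c ∈ A, 1 ≤ c := fun c hc => hAe c (by simp [hc])
      have hBe' : ∀ c ∈ B, 1 ≤ c := fun c hc => hBe c (by simp [hc])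
      have hcA0 : 0 ≤ cf A t := cf_nonneg hAe' ht0
      have hcB0 : 0 ≤ cf B t := cf_nonneg hBe' ht0
      have hlen' : A.length = B.length := by simpa using hlen
      rcases h with hs | ⟨rfl, hrec⟩
      · -- strict at the head
        have key : ∀ {x y : ℕ}, (y : ℕ) < x → cf (x :: A) t < cf (y :: B) t ∨ True := fun _ => Or.inr trivial
        -- main denominator comparison
        have main : ∀ (hyx : b < a), cf (a :: A) t < cf (b :: B) t := by
          intro hyx
          have hba : (b : ℝ) + 1 ≤ (a : ℝ) := by exact_mod_cast hyx
          have hden : (b : ℝ) + cf B t < (a : ℝ) + cf A t := by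
            rcases eq_or_ne A [] with rfl | hAne
            · have : B = [] := by simpa using hlen'.symm
              subst this
              simp only [cf_nil]
              linarith
            · have hBne : B ≠ [] := by
                intro hB; rw [hB] at hlen'; simp at hlen'; exact hAne hlen'
              have h1 : 0 < cf A t := cf_pos hAne hAe' ht0
              have h2 : cf B t ≤ 1 := cf_le_one hBne hBe' ht0
              linarith
          rw [cf_cons, cf_cons]
          exact one_div_lt_one_div_aux (by linarith) hden
        have main' : ∀ (hyx : a < b), cf (b :: B) t < cf (a :: A) t := by
          intro hyx
          have hba : (a : ℝ) + 1 ≤ (b : ℝ) := by exact_mod_cast hyx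
          have hden : (a : ℝ) + cf A t < (b : ℝ) + cf B t := by
            rcases eq_or_ne B [] with rfl | hBne
            · have : A = [] := by simpa using hlen'
              subst this
              simp only [cf_nil]
              linarith
            · have hAne : A ≠ [] := by
                intro hA; subst hA; exact hBne (List.eq_nil_of_length_eq_zero (by simp at hlen'; omega))
              have h1 : 0 < cf B t := cf_pos hBne hBe' ht0
              have h2 : cf A t ≤ 1 := cf_le_one hAne hAe' ht0
              linarith
          rw [cf_cons, cf_cons]
          exact one_div_lt_one_div_aux (by linarith) hden
        cases p with
        | true => simp only [if_true]; exact main (by simpa using hs)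
        | false => simp only [if_false, Bool.false_eq_true]; exact main' (by simpa using hs)
      · -- equal heads, recurse
        have := ih B (!p) t hlen' hAe' hBe' ht0 ht1 hrec
        cases p with
        | true =>
          simp only [Bool.not_true, if_false, Bool.false_eq_true] at this
          simp only [if_true]
          rw [cf_cons, cf_cons]
          exact one_div_lt_one_div_aux (by linarith) (by linarith)
        | false =>
          simp only [Bool.not_false, if_true] at this
          simp only [if_false, Bool.false_eq_true]
          rw [cf_cons, cf_cons]
          exact one_div_lt_one_div_aux (by linarith) (by linarith)

lemma alt_trichotomy : ∀ (A B : List ℕ) (p : Bool), A.length = B.length →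
    A = B ∨ alt p A B ∨ alt p B A := by
  intro A
  induction A with
  | nil =>
    intro B p hlen
    have : B = [] := by simpa using hlen.symm
    exact Or.inl this.symm
  | cons a A ih =>
    intro B p hlen
    cases B with
    | nil => simp at hlen
    | cons b B =>
      have hlen' : A.length = B.length := by simpa using hlen
      rcases Nat.lt_trichotomy a b with h | rfl | h
      · cases p with
        | true => exact Or.inr (Or.inr (Or.inl (by simp [h])))
        | false => exact Or.inr (Or.inl (Or.inl (by simp [h])))
      · rcases ih B (!p) hlen' with rfl | h | h
        · exact Or.inl rfl
        · exact Or.inr (Or.inl (Or.inr ⟨rfl, h⟩))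
        · exact Or.inr (Or.inr (Or.inr ⟨rfl, h⟩))
      · cases p with
        | true => exact Or.inr (Or.inl (Or.inl (by simp [h])))
        | false => exact Or.inr (Or.inr (Or.inl (by simp [h])))

lemma alt_asymm : ∀ (A B : List ℕ) (p : Bool), alt p A B → alt p B A → False := by
  intro A
  induction A with
  | nil => intro B p h _; exact alt_nil_left p B h
  | cons a A ih =>
    intro B p h h'
    cases B with
    | nil => exact alt_nil_right p _ h
    | cons b B =>
      rcases h with hs | ⟨he, hrec⟩ <;> rcases h' with hs' | ⟨he', hrec'⟩
      · cases p <;> simp_all <;> omega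
      · cases p <;> simp_all
      · cases p <;> simp_all
      · exact ih B (!p) hrec hrec'

lemma alt_strip : ∀ (C A B : List ℕ) (p : Bool), alt p (C ++ A) (C ++ B) →
    alt (if Even C.length then p else !p) A B := by
  intro C
  induction C with
  | nil => intro A B p h; simpa using h
  | cons c C ih =>
    intro A B p h
    simp only [List.cons_append] at h
    rcases h with hs | ⟨_, hrec⟩
    · cases p <;> simp at hs
    · have := ih A B (!p) hrec
      by_cases hE : Even C.length
      · have hE' : ¬ Even (C.length + 1) := by simpa [Nat.even_add_one] using hE
        rw [if_pos hE] at this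
        simpa [List.length_cons, if_neg hE'] using this
      · have hE' : Even (C.length + 1) := by simpa [Nat.even_add_one] using hE
        rw [if_neg hE] at this
        simpa [List.length_cons, if_pos hE'] using this

lemma alt_append_right : ∀ (A B C D : List ℕ) (p : Bool), A.length = B.length →
    alt p A B → alt p (A ++ C) (B ++ D) := by
  intro A
  induction A with
  | nil => intro B p C D _ h; exact absurd h (alt_nil_left _ _)
  | cons a A ih =>
    intro B C D p hlen h
    cases B with
    | nil => exact absurd h (alt_nil_right _ _)
    | cons b B =>
      rcases h with hs | ⟨he, hrec⟩
      · exact Or.inl hs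
      · exact Or.inr ⟨he, ih B C D (!p) (by simpa using hlen) hrec⟩

lemma alt_index : ∀ (A B : List ℕ) (p : Bool), alt p A B →
    ∃ j, ∃ (hA : j < A.length) (hB : j < B.length),
      (∀ i (hiA : i < A.length) (hiB : i < B.length), i < j → A[i] = B[i]) ∧
      (Even j → if p then B[j] < A[j] else A[j] < B[j]) ∧
      (¬ Even j → if p then A[j] < B[j] else B[j] < A[j]) := by
  intro A
  induction A with
  | nil => intro B p h; exact absurd h (alt_nil_left _ _)
  | cons a A ih =>
    intro B p h
    cases B with
    | nil => exact absurd h (alt_nil_right _ _)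
    | cons b B =>
      rcases h with hs | ⟨rfl, hrec⟩
      · refine ⟨0, by simp, by simp, ?_, ?_, ?_⟩
        · intro i _ _ hi; omega
        · intro _; simpa using hs
        · intro h0; exact absurd (Even.zero) h0
      · obtain ⟨j, hjA, hjB, hpre, hev, hod⟩ := ih B (!p) hrec
        refine ⟨j + 1, by simpa using Nat.succ_lt_succ hjA, by simpa using Nat.succ_lt_succ hjB,
          ?_, ?_, ?_⟩
        · intro i hiA hiB hij
          cases i with
          | zero => simp
          | succ i =>
            simp only [List.getElem_cons_succ]
            exact hpre i (by simpa using hiA) (by simpa using hiB) (by omega)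
        · intro hE
          have hE' : ¬ Even j := by simpa [Nat.even_add_one] using hE
          have := hod hE'
          cases p with
          | true => simpa using this
          | false => simpa using this
        · intro hE
          have hE' : Even j := by simpa [Nat.even_add_one] using hE
          have := hev hE'
          cases p with
          | true => simpa using this
          | false => simpa using this

/-! ### The key combinatorial lemma -/

lemma keyKL (U V W : List ℕ) (hUW : U <+: W) (hUV : (U ++ V) <+: (W ++ V))
    (h1 : alt true (V ++ U) (U ++ V)) (h2 : alt true (W ++ V) (V ++ W)) : False := by
  have huw : U.length ≤ W.length := hUW.length_le
  have hUS : U <+: W ++ V := hUW.trans (List.prefix_append W V)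
  have hWS : W <+: W ++ V := List.prefix_append W V
  set L := W ++ V with hL
  have hLlen : L.length = W.length + V.length := by simp [hL]
  -- value function, avoiding dependent getElem
  set f : ℕ → ℕ := fun i => L.getD i 0 with hf
  have hfval : ∀ i (h : i < L.length), f i = L[i] := by
    intro i h; simp [hf, List.getD_eq_getElem?_getD, List.getElem?_eq_getElem h]
  -- index map
  set g : ℕ → ℕ := fun i => if i < V.length then U.length + i else i - V.length with hg
  have hgbound : ∀ i, i < V.length + W.length → g i < L.length := by
    intro i hi; simp only [hg]; split <;> omega
  -- entry identifications
  have hVentry : ∀ i (h : i < V.length), V[i] = f (U.length + i) := by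
    intro i hi
    have hb : U.length + i < (U ++ V).length := by simp; omega
    have e1 : (U ++ V)[U.length + i]'hb = V[i] := by
      rw [List.getElem_append_right (by omega)]
      congr 1
      omega
    have e2 : (U ++ V)[U.length + i]'hb = L[U.length + i]'(hb.trans_le hUV.length_le) :=
      hUV.getElem hb
    rw [← e1, e2, hfval _ (hb.trans_le hUV.length_le)]
  have hUentry : ∀ i (h : i < U.length), U[i] = f i := by
    intro i hi
    rw [hUS.getElem hi, hfval _ (lt_of_lt_of_le hi (le_trans huw (by simp [hLlen])))]
  have hWentry : ∀ i (h : i < W.length), W[i] = f i := by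
    intro i hi
    rw [hWS.getElem hi, hfval _ (by omega)]
  have hLentry : ∀ i (h : i < L.length), L[i] = f i := by
    intro i hi; rw [hfval i hi]
  have hUVentry : ∀ i (h : i < (U ++ V).length), (U ++ V)[i] = f i := by
    intro i hi
    rw [hUV.getElem hi, hfval _ (hi.trans_le hUV.length_le)]
  have hVUentry : ∀ i (h : i < (V ++ U).length), (V ++ U)[i] = f (g i) := by
    intro i hi
    have hi' : i < V.length + U.length := by simpa using hi
    by_cases hiv : i < V.length
    · rw [List.getElem_append_left hiv, hVentry i hiv]
      simp only [hg]
      rw [if_pos hiv]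
    · rw [List.getElem_append_right (by omega)]
      rw [hUentry (i - V.length) (by omega)]
      simp only [hg]
      rw [if_neg hiv]
  have hVWentry : ∀ i (h : i < (V ++ W).length), (V ++ W)[i] = f (g i) := by
    intro i hi
    have hi' : i < V.length + W.length := by simpa using hi
    by_cases hiv : i < V.length
    · rw [List.getElem_append_left hiv, hVentry i hiv]
      simp only [hg]
      rw [if_pos hiv]
    · rw [List.getElem_append_right (by omega)]
      rw [hWentry (i - V.length) (by omega)]
      simp only [hg]
      rw [if_neg hiv]
  -- extract first differences
  obtain ⟨j₁, hj₁A, hj₁B, pre₁, ev₁, od₁⟩ := alt_index _ _ _ h1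
  obtain ⟨j₂, hj₂A, hj₂B, pre₂, ev₂, od₂⟩ := alt_index _ _ _ h2
  have hj₁ : j₁ < V.length + U.length := by simpa using hj₁A
  have hj₂ : j₂ < W.length + V.length := by rw [← hLlen]; exact hj₂A
  -- translate to f
  have P1 : ∀ i, i < j₁ → f (g i) = f i := by
    intro i hi
    have hiA : i < (V ++ U).length := by simp; omega
    have hiB : i < (U ++ V).length := by simp; omega
    have := pre₁ i hiA hiB hi
    rwa [hVUentry i hiA, hUVentry i hiB] at this
  have s1E : Even j₁ → f j₁ < f (g j₁) := by
    intro hE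
    have := ev₁ hE
    simp only [if_true] at this
    rwa [hVUentry j₁ hj₁A, hUVentry j₁ hj₁B] at this
  have s1O : ¬ Even j₁ → f (g j₁) < f j₁ := by
    intro hE
    have := od₁ hE
    simp only [if_true] at this
    rwa [hVUentry j₁ hj₁A, hUVentry j₁ hj₁B] at this
  have P2 : ∀ i, i < j₂ → f i = f (g i) := by
    intro i hi
    have hiA : i < L.length := by omega
    have hiB : i < (V ++ W).length := by simp; omega
    have := pre₂ i hiA hiB hi
    rwa [hLentry i hiA, hVWentry i hiB] at this
  have s2E : Even j₂ → f (g j₂) < f j₂ := by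
    intro hE
    have := ev₂ hE
    simp only [if_true] at this
    rwa [hLentry j₂ hj₂A, hVWentry j₂ hj₂B] at this
  have s2O : ¬ Even j₂ → f j₂ < f (g j₂) := by
    intro hE
    have := od₂ hE
    simp only [if_true] at this
    rwa [hLentry j₂ hj₂A, hVWentry j₂ hj₂B] at this
  rcases lt_trichotomy j₁ j₂ with h | rfl | h
  · have := P2 j₁ h
    by_cases hE : Even j₁
    · exact absurd this.symm (ne_of_gt (s1E hE))
    · exact absurd this (ne_of_gt (s1O hE))
  · by_cases hE : Even j₁
    · exact absurd (s1E hE) (not_lt_of_gt (s2E hE))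
    · exact absurd (s1O hE) (not_lt_of_gt (s2O hE))
  · have := P1 j₂ h
    by_cases hE : Even j₂
    · exact absurd this.symm (ne_of_gt (s2E hE))
    · exact absurd this (ne_of_gt (s2O hE))

/-! ### Conversions between `cf` comparisons and `alt` -/

lemma alt_of_cf_lt (A B : List ℕ) (hlen : A.length = B.length)
    (hAe : ∀ a ∈ A, 1 ≤ a) (hBe : ∀ a ∈ B, 1 ≤ a) (h : cf A 0 < cf B 0) :
    alt true A B := by
  rcases alt_trichotomy A B true hlen with rfl | h' | h'
  · exact absurd h (lt_irrefl _)
  · exact h'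
  · exfalso
    have := cf_lt_of_alt B A true 0 hlen.symm hBe hAe le_rfl zero_le_one h'
    simp only [if_true] at this
    linarith

/-! ### Borders of extremal words have odd length -/

lemma borderOdd (S A B C : List ℕ) (hpos : ∀ a ∈ S, 1 ≤ a) (hext : Extremal S)
    (hA : A ≠ []) (hB : B ≠ []) (hC : C ≠ []) (e1 : S = A ++ B) (e2 : S = B ++ C) :
    Odd B.length := by
  have hAe : ∀ a ∈ A, 1 ≤ a := fun a ha => hpos a (by rw [e1]; exact List.mem_append_left _ ha)
  have hBe : ∀ a ∈ B, 1 ≤ a := fun a ha => hpos a (by rw [e1]; exact List.mem_append_right _ ha)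
  have hCe : ∀ a ∈ C, 1 ≤ a := fun a ha => hpos a (by rw [e2]; exact List.mem_append_right _ ha)
  have appE : ∀ {P Q : List ℕ}, (∀ a ∈ P, 1 ≤ a) → (∀ a ∈ Q, 1 ≤ a) →
      (∀ a ∈ P ++ Q, 1 ≤ a) := by
    intro P Q hP hQ a ha
    rcases List.mem_append.mp ha with h | h
    · exact hP a h
    · exact hQ a h
  by_contra hodd
  have hEv : Even B.length := Nat.not_odd_iff_even.mp hodd
  have e3 : A ++ B = B ++ C := by rw [← e1, e2]
  have hlen : C.length = A.length := by
    have := congrArg List.length e3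
    simp only [List.length_append] at this
    omega
  have c1 : cf (A ++ B) 0 < cf (B ++ A) 0 := hext A B hA hB e1
  have a1 : alt true (A ++ B) (B ++ A) :=
    alt_of_cf_lt _ _ (by simp [Nat.add_comm]) (appE hAe hBe) (appE hBe hAe) c1
  have a1' : alt true (B ++ C) (B ++ A) := by rwa [e3] at a1
  have a2 : alt true C A := by
    have := alt_strip B C A true a1'
    rwa [if_pos hEv] at this
  have a3 : alt true (C ++ B) (A ++ B) := alt_append_right _ _ _ _ _ hlen a2
  have c2 : cf (B ++ C) 0 < cf (C ++ B) 0 := hext B C hB hC e2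
  have a4 : alt true (B ++ C) (C ++ B) :=
    alt_of_cf_lt _ _ (by simp [Nat.add_comm]) (appE hBe hCe) (appE hCe hBe) c2
  have a4' : alt true (A ++ B) (C ++ B) := by rwa [← e3] at a4
  exact alt_asymm _ _ _ a3 a4'

/-! ### Main theorem -/

theorem prefix_suffix_of_extremal (S X Y Z : List ℕ)
    (hpos : ∀ a ∈ S, 1 ≤ a) (hext : Extremal S)
    (hX : X ≠ []) (hY : Y ≠ []) (hZ : Z ≠ [])
    (h1 : S = X ++ Y) (h2 : S = Y ++ Z) :
    Odd Y.length ∧ Extremal Y := by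
  have hXe : ∀ a ∈ X, 1 ≤ a := fun a ha => hpos a (by rw [h1]; exact List.mem_append_left _ ha)
  have hYe : ∀ a ∈ Y, 1 ≤ a := fun a ha => hpos a (by rw [h1]; exact List.mem_append_right _ ha)
  have hZe : ∀ a ∈ Z, 1 ≤ a := fun a ha => hpos a (by rw [h2]; exact List.mem_append_right _ ha)
  have appE : ∀ {P Q : List ℕ}, (∀ a ∈ P, 1 ≤ a) → (∀ a ∈ Q, 1 ≤ a) →
      (∀ a ∈ P ++ Q, 1 ≤ a) := by
    intro P Q hP hQ a ha
    rcases List.mem_append.mp ha with h | h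
    · exact hP a h
    · exact hQ a h
  have hodd : Odd Y.length := borderOdd S X Y Z hpos hext hX hY hZ h1 h2
  refine ⟨hodd, ?_⟩
  intro U V hU hV hYUV
  have hUe : ∀ a ∈ U, 1 ≤ a := fun a ha => hYe a (by rw [hYUV]; exact List.mem_append_left _ ha)
  have hVe : ∀ a ∈ V, 1 ≤ a := fun a ha => hYe a (by rw [hYUV]; exact List.mem_append_right _ ha)
  have hXUne : X ++ U ≠ [] := fun h => hX (List.append_eq_nil_iff.mp h).1
  have hXVne : X ++ V ≠ [] := fun h => hX (List.append_eq_nil_iff.mp h).1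
  have hVZne : V ++ Z ≠ [] := fun h => hV (List.append_eq_nil_iff.mp h).1
  have hUZne : U ++ Z ≠ [] := fun h => hU (List.append_eq_nil_iff.mp h).1
  rcases alt_trichotomy (U ++ V) (V ++ U) true (by simp [Nat.add_comm]) with heq | hlt | hgt
  · -- the pieces commute : both U and V are borders of S, contradiction with parity
    exfalso
    have oU : Odd U.length := by
      refine borderOdd S (X ++ V) U (V ++ Z) hpos hext hXVne hU hVZne ?_ ?_
      · rw [h1, hYUV, heq, ← List.append_assoc]
      · rw [h2, hYUV, List.append_assoc]
    have oV : Odd V.length := by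
      refine borderOdd S (X ++ U) V (U ++ Z) hpos hext hXUne hV hUZne ?_ ?_
      · rw [h1, hYUV, ← List.append_assoc]
      · rw [h2, hYUV, heq, List.append_assoc]
    have hEv : Even (U.length + V.length) := oU.add_odd oV
    rw [hYUV, List.length_append] at hodd
    exact (Nat.not_odd_iff_even.mpr hEv) hodd
  · -- the good case
    have := cf_lt_of_alt (U ++ V) (V ++ U) true 0 (by simp [Nat.add_comm])
      (appE hUe hVe) (appE hVe hUe) le_rfl zero_le_one hlt
    simpa using this
  · -- contradiction with extremality via the key lemma
    exfalso
    have hUpre : U <+: S := ⟨V ++ Z, by rw [h2, hYUV, List.append_assoc]⟩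
    have hXUpre : X ++ U <+: S := ⟨V, by rw [h1, hYUV, List.append_assoc]⟩
    have hW : U <+: (X ++ U) :=
      List.prefix_of_prefix_length_le hUpre hXUpre (by simp)
    have hUV2 : (U ++ V) <+: ((X ++ U) ++ V) := by
      refine ⟨Z, ?_⟩
      rw [← hYUV, ← h2, h1, hYUV, List.append_assoc]
    have c3 : cf ((X ++ U) ++ V) 0 < cf (V ++ (X ++ U)) 0 := by
      refine hext (X ++ U) V hXUne hV ?_
      rw [h1, hYUV, List.append_assoc]
    have h2' : alt true ((X ++ U) ++ V) (V ++ (X ++ U)) := by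
      refine alt_of_cf_lt _ _ (by simp; omega) ?_ ?_ c3
      · exact appE (appE hXe hUe) hVe
      · exact appE hVe (appE hXe hUe)
    exact keyKL U V (X ++ U) hW hUV2 hgt h2'
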